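/- For every n ≥ 2 and every subset A of L: (1) (X, τ(A)) is perfect if and only if A is a Gδ-set in L with its Euclidean subspace topology; (2) (X, τ(A)) is Lindelöf if and only if L \ A does not contain any uncountable subset closed in L with its Euclidean subspace topology; (3) (X, τ(A)) is σ-compact if and only if A is an Fσ-set in L with its Euclidean subspace topology and L \ A is countable. -/

import Mathlib

open Metric Set TopologicalSpace

noncomputable section

/-- The last coordinate `x (n-1)` of a point of `EuclideanSpace ℝ (Fin n)`
(junk value `0` if `n = 0`). -/
def lastCoord (n : ℕ) (x : EuclideanSpace ℝ (Fin n)) : ℝ :=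
  if h : 0 < n then x ⟨n - 1, Nat.sub_lt h one_pos⟩ else 0

/-- The closed upper half-space `X = {x : x (n-1) ≥ 0}`. -/
def HalfSpace (n : ℕ) : Set (EuclideanSpace ℝ (Fin n)) := {x | 0 ≤ lastCoord n x}

/-- The open upper half-space `P = {x : x (n-1) > 0}`. -/
def OpenHalf (n : ℕ) : Set (EuclideanSpace ℝ (Fin n)) := {x | 0 < lastCoord n x}

/-- The boundary hyperplane `L = {x : x (n-1) = 0}`. -/
def Bdry (n : ℕ) : Set (EuclideanSpace ℝ (Fin n)) := {x | lastCoord n x = 0}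

/-- The `n`-th standard basis vector `e` (junk value `0` if `n = 0`). -/
def eVec (n : ℕ) : EuclideanSpace ℝ (Fin n) :=
  if h : 0 < n then EuclideanSpace.single ⟨n - 1, Nat.sub_lt h one_pos⟩ (1 : ℝ) else 0

/-- The tangent ball `B̃(a, ε) = {a} ∪ B(a + ε • e, ε)`. -/
def tangentBall (n : ℕ) (a : EuclideanSpace ℝ (Fin n)) (ε : ℝ) :
    Set (EuclideanSpace ℝ (Fin n)) :=
  {a} ∪ ball (a + ε • eVec n) ε

/-- The generating family for the topology `τ(A)` on `X`:
balls `B(a,ε)` with `a ∈ P`, `0 < ε < a (n-1)`; traces `B(a,ε) ∩ X` with `a ∈ A`, `ε > 0`;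
and tangent balls `B̃(a,ε)` with `a ∈ L \ A`, `ε > 0`. -/
def niemGen (n : ℕ) (A : Set (EuclideanSpace ℝ (Fin n))) : Set (Set (HalfSpace n)) :=
  {s | ∃ a ∈ OpenHalf n, ∃ ε, 0 < ε ∧ ε < lastCoord n a ∧
      s = Subtype.val ⁻¹' ball a ε} ∪
  {s | ∃ a ∈ A, ∃ ε, 0 < ε ∧ s = Subtype.val ⁻¹' ball a ε} ∪
  {s | ∃ a ∈ Bdry n \ A, ∃ ε, 0 < ε ∧ s = Subtype.val ⁻¹' tangentBall n a ε}

/-- The topology `τ(A)` on `X`; `τ(∅)` is the Niemytzki topology `τ_N`. -/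
def tau (n : ℕ) (A : Set (EuclideanSpace ℝ (Fin n))) : TopologicalSpace (HalfSpace n) :=
  generateFrom (niemGen n A)

/-- The inclusion of `L` into `X`. -/
def inclLX (n : ℕ) (x : Bdry n) : HalfSpace n := ⟨x.1, le_of_eq x.2.symm⟩

/-- The subspace topology `τ(A)|_L` on `L` induced from `(X, τ(A))`. -/
def tauL (n : ℕ) (A : Set (EuclideanSpace ℝ (Fin n))) : TopologicalSpace (Bdry n) :=
  TopologicalSpace.induced (inclLX n) (tau n A)

/-- A space is perfect if every closed set is a `Gδ`-set. -/
def IsPerfectSpace (X : Type*) [TopologicalSpace X] : Prop :=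
  ∀ s : Set X, IsClosed s → IsGδ s

/-- An `Fσ`-set: a countable union of closed sets. -/
def IsFsigma {X : Type*} [TopologicalSpace X] (s : Set X) : Prop :=
  ∃ F : ℕ → Set X, (∀ i, IsClosed (F i)) ∧ s = ⋃ i, F i

/-- Countably paracompact: every countable open cover admits a locally finite open refinement. -/
def CountablyParacompact (X : Type*) [TopologicalSpace X] : Prop :=
  ∀ u : ℕ → Set X, (∀ i, IsOpen (u i)) → (⋃ i, u i) = Set.univ →
    ∃ (ι : Type) (v : ι → Set X), (∀ j, IsOpen (v j)) ∧ (⋃ j, v j) = Set.univ ∧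
      LocallyFinite v ∧ ∀ j, ∃ i, v j ⊆ u i

/-- A zero set: the zero locus of a continuous real-valued function. -/
def IsZeroSet {X : Type*} [TopologicalSpace X] (s : Set X) : Prop :=
  ∃ f : X → ℝ, Continuous f ∧ s = f ⁻¹' {0}

/-- `Y` is z-embedded in `X` if every zero set of the subspace `Y`
is the trace on `Y` of a zero set of `X`. -/
def ZEmbedded {X : Type*} [TopologicalSpace X] (Y : Set X) : Prop :=
  ∀ s : Set Y, IsZeroSet s → ∃ Z : Set X, IsZeroSet Z ∧ s = Subtype.val ⁻¹' Z

/-- `Y` is `C*`-embedded in `X` if every bounded continuous real-valued function on the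
subspace `Y` extends to a bounded continuous function on `X`. -/
def CStarEmbedded {X : Type*} [TopologicalSpace X] (Y : Set X) : Prop :=
  ∀ f : Y → ℝ, Continuous f → (∃ M, ∀ y, |f y| ≤ M) →
    ∃ g : X → ℝ, Continuous g ∧ (∃ M, ∀ x, |g x| ≤ M) ∧ ∀ y : Y, g ↑y = f y
end

/-!
At a point `z` of `X`, the traces of the Euclidean balls `B(z, δ)` form a `τ(A)`-neighbourhood
basis, except at `z ∈ L \ A`, where the tangent balls `B̃(z, δ)` do; these meet `L` only in `z`.
Hence `τ(A)` is Euclidean away from `L \ A`, and Euclidean-closed subsets of `L \ A` are closed and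
discrete. So a `τ(A)`-open set is a Euclidean open set plus a part of `L \ A`; if `A` is `Gδ` in
`L`, that part lies in countably many closed discrete sets, which makes every open set `Fσ`. An open
cover has a countable subcover except on a Euclidean-closed subset of `L \ A`. Finally, Euclidean
compact sets avoiding `L \ A` stay `τ(A)`-compact, and compact sets meet `L \ A` in countable sets.
-/

open Filter Topology

section General

variable {X : Type*}

lemma IsGδ.isFsigma_compl [TopologicalSpace X] {s : Set X} (hs : IsGδ s) : IsFsigma sᶜ := by
  obtain ⟨U, hU, rfl⟩ := isGδ_iff_eq_iInter_nat.1 hs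
  exact ⟨fun k => (U k)ᶜ, fun k => (hU k).isClosed_compl, compl_iInter U⟩

lemma isFsigma_preimage_val_iff [TopologicalSpace X] {s t : Set X} (hs : IsClosed s) :
    IsFsigma (Subtype.val ⁻¹' t : Set s) ↔
      ∃ C : ℕ → Set X, (∀ i, IsClosed (C i)) ∧ ⋃ i, C i = s ∩ t := by
  constructor
  · rintro ⟨F, hF, hFt⟩
    exact ⟨fun i => Subtype.val '' F i, fun i => (hF i).trans hs,
      by rw [← image_iUnion, ← hFt, Subtype.image_preimage_coe]⟩
  · rintro ⟨C, hC, hCt⟩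
    exact ⟨fun i => Subtype.val ⁻¹' C i, fun i => (hC i).preimage continuous_subtype_val,
      by rw [← preimage_iUnion, hCt, Subtype.preimage_coe_self_inter]⟩

lemma isClosed_preimage_val_iff_of_subset [TopologicalSpace X] {s t : Set X} (hs : IsClosed s)
    (ht : t ⊆ s) : IsClosed (Subtype.val ⁻¹' t : Set s) ↔ IsClosed t := by
  refine ⟨fun h => ?_, fun h => h.preimage continuous_subtype_val⟩
  simpa only [Subtype.image_preimage_coe, inter_eq_right.2 ht] using h.trans hs

lemma IsGδ.preimage_of_continuousAt [TopologicalSpace X] {Y : Type*} [TopologicalSpace Y]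
    {f : X → Y} {s : Set Y} (hs : IsGδ s) (hf : ∀ x ∈ f ⁻¹' s, ContinuousAt f x) :
    IsGδ (f ⁻¹' s) := by
  obtain ⟨U, hU, rfl⟩ := isGδ_iff_eq_iInter_nat.1 hs
  convert IsGδ.iInter_of_isOpen fun k => isOpen_interior (s := f ⁻¹' U k) using 1
  refine Subset.antisymm (fun x hx => mem_iInter.2 fun k => ?_)
    ((iInter_mono fun k => interior_subset).trans preimage_iInter.superset)
  exact mem_interior_iff_mem_nhds.2
    ((hf x hx).preimage_mem_nhds ((hU k).mem_nhds (mem_iInter.1 hx k)))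

lemma isCompact_of_nhds_le {t₁ t₂ : TopologicalSpace X} {s : Set X} (hs : @IsCompact X t₁ s)
    (h : ∀ x ∈ s, @nhds X t₁ x ≤ @nhds X t₂ x) : @IsCompact X t₂ s :=
  fun _ _ hfs =>
    let ⟨x, hx, hcl⟩ := hs hfs
    ⟨x, hx, Filter.NeBot.mono hcl (inf_le_inf_right _ (h x hx))⟩

lemma IsSigmaCompact.union [TopologicalSpace X] {s t : Set X} (hs : IsSigmaCompact s)
    (ht : IsSigmaCompact t) : IsSigmaCompact (s ∪ t) := by
  rw [union_eq_iUnion]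
  exact isSigmaCompact_iUnion _ fun b => by cases b; exacts [ht, hs]

lemma Set.Countable.isSigmaCompact [TopologicalSpace X] {s : Set X} (hs : s.Countable) :
    IsSigmaCompact s := by
  simpa only [biUnion_of_singleton] using
    isSigmaCompact_biUnion hs fun x _ => (isCompact_singleton (x := x)).isSigmaCompact

lemma countable_diff_of_forall_isClosed [TopologicalSpace X] [PerfectlyNormalSpace X]
    {C D : Set X} (hC : IsClosed C) (hD : IsClosed D)
    (h : ∀ F, IsClosed F → F ⊆ C \ D → F.Countable) : (C \ D).Countable := by
  obtain ⟨F, hF, hFD⟩ := hD.isGδ.isFsigma_compl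
  have hCD : C \ D = ⋃ k, C ∩ F k := by rw [← inter_iUnion, ← hFD, sdiff_eq]
  rw [hCD]
  exact countable_iUnion fun k => h _ (hC.inter (hF k)) (hCD ▸ subset_iUnion (fun k => C ∩ F k) k)

end General

section Geometry

variable {n : ℕ}

lemma continuous_lastCoord : Continuous (lastCoord n) := by
  unfold lastCoord
  split_ifs <;> fun_prop

lemma isClosed_bdry : IsClosed (Bdry n) :=
  isClosed_eq continuous_lastCoord continuous_const

lemma bdry_subset_halfSpace : Bdry n ⊆ HalfSpace n := fun _ hx => hx.ge

lemma abs_lastCoord_sub_le_dist (hn : 0 < n) (x y : EuclideanSpace ℝ (Fin n)) :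
    |lastCoord n x - lastCoord n y| ≤ dist x y := by
  simpa only [lastCoord, dif_pos hn, Real.dist_eq] using PiLp.dist_apply_le x y _

lemma lastCoord_add_smul_eVec (hn : 0 < n) (a : EuclideanSpace ℝ (Fin n)) (ε : ℝ) :
    lastCoord n (a + ε • eVec n) = lastCoord n a + ε := by
  simp [lastCoord, eVec, dif_pos hn]

lemma norm_eVec (hn : 0 < n) : ‖eVec n‖ = 1 := by
  simp [eVec, dif_pos hn]

lemma lastCoord_pos_of_mem_ball (hn : 0 < n) {c y : EuclideanSpace ℝ (Fin n)} {r : ℝ}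
    (hy : y ∈ ball c r) (hr : r ≤ lastCoord n c) : 0 < lastCoord n y := by
  have := (abs_le.1 (abs_lastCoord_sub_le_dist hn y c)).1
  linarith [mem_ball.1 hy]

lemma eq_of_mem_tangentBall_of_mem_bdry (hn : 0 < n) {a y : EuclideanSpace ℝ (Fin n)} {ε : ℝ}
    (ha : a ∈ Bdry n) (hy : y ∈ tangentBall n a ε) (hyL : y ∈ Bdry n) : y = a := by
  refine hy.resolve_right fun hball => (lastCoord_pos_of_mem_ball hn hball ?_).ne' hyL
  rw [lastCoord_add_smul_eVec hn, ha, zero_add]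

lemma tangentBall_mono (hn : 0 < n) {a : EuclideanSpace ℝ (Fin n)} {δ ε : ℝ} (h : δ ≤ ε) :
    tangentBall n a δ ⊆ tangentBall n a ε := by
  refine union_subset_union_right _ (ball_subset_ball' (le_of_eq ?_))
  rw [dist_add_left, dist_eq_norm, ← sub_smul, norm_smul, norm_eVec hn, mul_one,
    Real.norm_eq_abs, abs_of_nonpos (by linarith)]
  ring

lemma tangentBall_subset_ball (hn : 0 < n) {a : EuclideanSpace ℝ (Fin n)} {ε : ℝ} (hε : 0 < ε) :
    tangentBall n a ε ⊆ ball a (2 * ε) := by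
  refine union_subset (singleton_subset_iff.2 (mem_ball_self (by positivity)))
    (ball_subset_ball' (le_of_eq ?_))
  rw [dist_self_add_left, norm_smul, norm_eVec hn, mul_one, Real.norm_eq_abs, abs_of_pos hε]
  ring

end Geometry

section NeighbourhoodBasis

variable {n : ℕ} {A : Set (EuclideanSpace ℝ (Fin n))}

open Classical in
def tauBall (n : ℕ) (A : Set (EuclideanSpace ℝ (Fin n))) (x : EuclideanSpace ℝ (Fin n))
    (δ : ℝ) : Set (EuclideanSpace ℝ (Fin n)) :=
  if x ∈ Bdry n \ A then tangentBall n x δ else ball x δ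

lemma tauBall_of_mem {x : EuclideanSpace ℝ (Fin n)} (hx : x ∈ Bdry n \ A) (δ : ℝ) :
    tauBall n A x δ = tangentBall n x δ := if_pos hx

lemma tauBall_of_notMem {x : EuclideanSpace ℝ (Fin n)} (hx : x ∉ Bdry n \ A) (δ : ℝ) :
    tauBall n A x δ = ball x δ := if_neg hx

lemma tauBall_mono (hn : 0 < n) (x : EuclideanSpace ℝ (Fin n)) {δ ε : ℝ} (h : δ ≤ ε) :
    tauBall n A x δ ⊆ tauBall n A x ε := by
  unfold tauBall
  split_ifs
  exacts [tangentBall_mono hn h, ball_subset_ball h]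

lemma exists_tauBall_subset (hn : 0 < n) {O : Set (EuclideanSpace ℝ (Fin n))} (hO : IsOpen O)
    {x : EuclideanSpace ℝ (Fin n)} (hx : x ∈ O) : ∃ δ > 0, tauBall n A x δ ⊆ O := by
  obtain ⟨ε, hε, hεO⟩ := Metric.isOpen_iff.1 hO x hx
  refine ⟨ε / 2, half_pos hε, fun y hy => hεO ?_⟩
  have hsub : tauBall n A x (ε / 2) ⊆ ball x (2 * (ε / 2)) := by
    unfold tauBall
    split_ifs
    exacts [tangentBall_subset_ball hn (half_pos hε), ball_subset_ball (by linarith)]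
  simpa [mul_div_cancel₀] using hsub hy

lemma exists_tauBall_subset_of_mem_niemGen (hn : 0 < n) {s : Set (HalfSpace n)}
    (hs : s ∈ niemGen n A) {z : HalfSpace n} (hz : z ∈ s) :
    ∃ δ > 0, Subtype.val ⁻¹' tauBall n A z.1 δ ⊆ s := by
  rcases hs with (⟨c, -, ε, -, -, rfl⟩ | ⟨c, -, ε, -, rfl⟩) | ⟨a, ha, ε, hε, rfl⟩
  iterate 2
    obtain ⟨δ, hδ, hsub⟩ := exists_tauBall_subset hn (A := A) isOpen_ball hz
    exact ⟨δ, hδ, preimage_mono hsub⟩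
  rcases hz with hza | hzb
  · refine ⟨ε, hε, ?_⟩
    rw [show z.1 = a from hza, tauBall_of_mem ha]
  · obtain ⟨δ, hδ, hsub⟩ := exists_tauBall_subset hn (A := A) isOpen_ball hzb
    exact ⟨δ, hδ, preimage_mono (hsub.trans subset_union_right)⟩

lemma tauBall_mem_nhds (z : HalfSpace n) {δ : ℝ} (hδ : 0 < δ) :
    Subtype.val ⁻¹' tauBall n A z.1 δ ∈ @nhds _ (tau n A) z := by
  let _ := tau n A
  have basic_mem_nhds {s : Set (HalfSpace n)} (hs : s ∈ niemGen n A) (hz : z ∈ s) : s ∈ 𝓝 z :=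
    IsOpen.mem_nhds (GenerateOpen.basic s hs) hz
  by_cases hL : z.1 ∈ Bdry n \ A
  · rw [tauBall_of_mem hL]
    exact basic_mem_nhds (Or.inr ⟨z.1, hL, δ, hδ, rfl⟩) (Or.inl rfl)
  rw [tauBall_of_notMem hL]
  by_cases hA : z.1 ∈ A
  · exact basic_mem_nhds (Or.inl (Or.inr ⟨z.1, hA, δ, hδ, rfl⟩)) (mem_ball_self hδ)
  have hP : 0 < lastCoord n z.1 := z.2.lt_of_ne fun h => hL ⟨h.symm, hA⟩
  have hr : 0 < min δ (lastCoord n z.1 / 2) := lt_min hδ (half_pos hP)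
  refine mem_of_superset (basic_mem_nhds (Or.inl (Or.inl ⟨z.1, hP, _, hr, ?_, rfl⟩))
    (mem_ball_self hr)) (preimage_mono (ball_subset_ball (min_le_left _ _)))
  exact (min_le_right _ _).trans_lt (half_lt_self hP)

lemma nhds_tau_hasBasis (hn : 0 < n) (z : HalfSpace n) :
    (@nhds _ (tau n A) z).HasBasis (fun δ : ℝ => 0 < δ)
      (fun δ => Subtype.val ⁻¹' tauBall n A z.1 δ) := by
  have hbasis := hasBasis_biInf_principal' (p := fun δ : ℝ => 0 < δ)
    (s := fun δ => (Subtype.val ⁻¹' tauBall n A z.1 δ : Set (HalfSpace n)))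
    (fun δ hδ ε hε => ⟨min δ ε, lt_min hδ hε,
      preimage_mono (tauBall_mono hn _ (min_le_left _ _)),
      preimage_mono (tauBall_mono hn _ (min_le_right _ _))⟩) ⟨1, one_pos⟩
  convert hbasis using 1
  refine le_antisymm (le_iInf₂ fun δ hδ => le_principal_iff.2 (tauBall_mem_nhds z hδ)) ?_
  rw [tau, nhds_generateFrom]
  refine le_iInf₂ fun s ⟨hzs, hs⟩ => le_principal_iff.2 ?_
  obtain ⟨δ, hδ, hsub⟩ := exists_tauBall_subset_of_mem_niemGen hn hs hzs
  exact hbasis.mem_iff.2 ⟨δ, hδ, hsub⟩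

end NeighbourhoodBasis

section TauAPI

variable {n : ℕ} {A : Set (EuclideanSpace ℝ (Fin n))}

lemma continuous_val_tau (hn : 0 < n) :
    Continuous[tau n A, _] (Subtype.val : HalfSpace n → EuclideanSpace ℝ (Fin n)) := by
  let _ := tau n A
  refine continuous_iff_continuousAt.2 fun z => ?_
  refine ((nhds_tau_hasBasis hn z).tendsto_iff Metric.nhds_basis_ball).2 fun ε hε => ?_
  obtain ⟨δ, hδ, hsub⟩ := exists_tauBall_subset hn (A := A) isOpen_ball (mem_ball_self hε)
  exact ⟨δ, hδ, fun w hw => hsub hw⟩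

/-- Tangent balls meet `L` only in their base point, so only points of `A` can be limit points of
a subset of `L`. -/
lemma isClosed_tau_of_subset_bdry (hn : 0 < n) {S : Set (HalfSpace n)}
    (hSL : S ⊆ Subtype.val ⁻¹' Bdry n)
    (hSA : ∀ z : HalfSpace n, z.1 ∈ Bdry n ∩ A → z.1 ∈ closure (Subtype.val '' S) → z ∈ S) :
    IsClosed[tau n A] S := by
  let _ := tau n A
  refine isOpen_compl_iff.1 (isOpen_iff_mem_nhds.2 fun z hz => ?_)
  rw [(nhds_tau_hasBasis hn z).mem_iff]
  by_cases hL : z.1 ∈ Bdry n \ A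
  · refine ⟨1, one_pos, fun w hw hwS => hz ?_⟩
    rw [mem_preimage, tauBall_of_mem hL] at hw
    rwa [← Subtype.ext (eq_of_mem_tangentBall_of_mem_bdry hn hL.1 hw (hSL hwS))]
  have hcl : z.1 ∉ closure (Subtype.val '' S) := fun hcl => by
    have hzL : z.1 ∈ Bdry n :=
      closure_minimal (image_subset_iff.2 hSL) isClosed_bdry hcl
    exact hz (hSA z ⟨hzL, not_not.1 fun hA => hL ⟨hzL, hA⟩⟩ hcl)
  obtain ⟨δ, hδ, hsub⟩ := exists_tauBall_subset hn (A := A) isClosed_closure.isOpen_compl hcl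
  exact ⟨δ, hδ, fun w hw hwS => hsub hw (subset_closure (mem_image_of_mem _ hwS))⟩

lemma isClosed_tau_of_subset_preimage (hn : 0 < n) {C : Set (EuclideanSpace ℝ (Fin n))}
    (hC : IsClosed C) (hCA : C ⊆ Bdry n \ A) {S : Set (HalfSpace n)}
    (hS : S ⊆ Subtype.val ⁻¹' C) : IsClosed[tau n A] S := by
  refine isClosed_tau_of_subset_bdry hn (fun z hz => (hCA (hS hz)).1) fun z hzA hz => ?_
  have hzC : z.1 ∈ C := closure_minimal (image_subset_iff.2 hS) hC hz
  exact absurd hzA.2 (hCA hzC).2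

lemma isDiscrete_preimage_bdry_diff (hn : 0 < n) {S : Set (HalfSpace n)}
    (hS : ∀ z ∈ S, z.1 ∈ Bdry n \ A) : @IsDiscrete _ (tau n A) S := by
  let _ := tau n A
  refine IsDiscrete.of_nhdsWithin fun z hz => le_pure_iff.2
    (mem_nhdsWithin_iff_exists_mem_nhds_inter.2 ⟨_, tauBall_mem_nhds z one_pos, ?_⟩)
  rintro w ⟨hw, hwS⟩
  rw [mem_preimage, tauBall_of_mem (hS z hz)] at hw
  exact Subtype.ext (eq_of_mem_tangentBall_of_mem_bdry hn (hS z hz).1 hw (hS w hwS).1)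

lemma exists_isOpen_preimage_subset (hn : 0 < n) {U : Set (HalfSpace n)} (hU : IsOpen[tau n A] U) :
    ∃ V : Set (EuclideanSpace ℝ (Fin n)), IsOpen V ∧ Subtype.val ⁻¹' V ⊆ U ∧
      ∀ z ∈ U, z.1 ∉ Bdry n \ A → z.1 ∈ V := by
  let _ := tau n A
  refine ⟨⋃₀ {O | IsOpen O ∧ Subtype.val ⁻¹' O ⊆ U}, isOpen_sUnion fun O hO => hO.1, ?_,
    fun z hz hL => ?_⟩
  · rw [preimage_sUnion]
    exact iUnion₂_subset fun O hO => hO.2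
  obtain ⟨δ, hδ, hsub⟩ := (nhds_tau_hasBasis hn z).mem_iff.1 (hU.mem_nhds hz)
  rw [tauBall_of_notMem hL] at hsub
  exact ⟨ball z.1 δ, ⟨isOpen_ball, hsub⟩, mem_ball_self hδ⟩

end TauAPI

section Perfect

variable {n : ℕ} {A : Set (EuclideanSpace ℝ (Fin n))}

lemma continuousAt_inclLX (hn : 0 < n) {y : Bdry n} (hy : y.1 ∈ A) :
    @ContinuousAt _ _ _ (tau n A) (inclLX n) y := by
  refine (nhds_tau_hasBasis hn _).tendsto_right_iff.2 fun δ hδ => ?_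
  rw [show (inclLX n y).1 = y.1 from rfl, tauBall_of_notMem fun h => h.2 hy]
  exact continuous_subtype_val.continuousAt.preimage_mem_nhds (ball_mem_nhds _ hδ)

lemma isGδ_of_isPerfectSpace (hn : 0 < n) (h : @IsPerfectSpace _ (tau n A)) :
    IsGδ (Subtype.val ⁻¹' A : Set (Bdry n)) := by
  let _ := tau n A
  have hclosed : IsClosed (Subtype.val ⁻¹' (Bdry n ∩ A) : Set (HalfSpace n)) :=
    isClosed_tau_of_subset_bdry hn (fun _ hz => hz.1) fun _ hz _ => hz
  convert (h _ hclosed).preimage_of_continuousAt fun y hy => continuousAt_inclLX hn hy.2 using 1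
  ext y
  exact ⟨fun hy => ⟨y.2, hy⟩, fun hy => hy.2⟩

lemma isPerfectSpace_of_isGδ (hn : 0 < n) (hA : IsGδ (Subtype.val ⁻¹' A : Set (Bdry n))) :
    @IsPerfectSpace _ (tau n A) := by
  let _ := tau n A
  obtain ⟨C, hC, hCA⟩ : ∃ C : ℕ → Set (EuclideanSpace ℝ (Fin n)),
      (∀ k, IsClosed (C k)) ∧ ⋃ k, C k = Bdry n \ A :=
    (isFsigma_preimage_val_iff isClosed_bdry).1 hA.isFsigma_compl
  have hCsub (k : ℕ) : C k ⊆ Bdry n \ A := hCA ▸ subset_iUnion C k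
  intro F hF
  obtain ⟨V, hV, hVF, hFV⟩ := exists_isOpen_preimage_subset hn hF.isOpen_compl
  have hFeq : F = Subtype.val ⁻¹' Vᶜ ∩ ⋂ k, (Fᶜ ∩ Subtype.val ⁻¹' C k)ᶜ := by
    ext z
    refine ⟨fun hz => ⟨fun hzV => hVF hzV hz, mem_iInter.2 fun k hk => hk.1 hz⟩, ?_⟩
    rintro ⟨hzV, hzC⟩
    by_contra hz
    obtain ⟨k, hk⟩ := mem_iUnion.1
      (hCA ▸ not_not.1 fun hL => hzV (hFV z hz hL) : z.1 ∈ ⋃ k, C k)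
    exact mem_iInter.1 hzC k ⟨hz, hk⟩
  rw [hFeq]
  exact (hV.isClosed_compl.isGδ.preimage (continuous_val_tau hn)).inter
    (IsGδ.iInter_of_isOpen fun k =>
      (isClosed_tau_of_subset_preimage hn (hC k) (hCsub k) inter_subset_right).isOpen_compl)

end Perfect

section Lindelof

variable {n : ℕ} {A : Set (EuclideanSpace ℝ (Fin n))}

lemma countable_of_isClosed_subset_bdry_diff (hn : 0 < n) (h : @LindelofSpace _ (tau n A))
    {B : Set (EuclideanSpace ℝ (Fin n))} (hB : IsClosed B) (hBA : B ⊆ Bdry n \ A) :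
    B.Countable := by
  let _ := tau n A
  have hS : IsClosed (Subtype.val ⁻¹' B : Set (HalfSpace n)) :=
    isClosed_tau_of_subset_preimage hn hB hBA subset_rfl
  have hcount := (hS.isLindelof.countable_of_isDiscrete
    (isDiscrete_preimage_bdry_diff hn fun _ hz => hBA hz)).image Subtype.val
  rwa [Subtype.image_preimage_coe, inter_eq_right.2 (hBA.trans sdiff_subset |>.trans
    bdry_subset_halfSpace)] at hcount

lemma lindelofSpace_of_forall_countable (hn : 0 < n)
    (h : ∀ B, IsClosed B → B ⊆ Bdry n \ A → B.Countable) : @LindelofSpace _ (tau n A) := by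
  let _ := tau n A
  refine ⟨isLindelof_of_countable_subcover fun U hU hcover => ?_⟩
  choose V hV hVU hUV using fun i => exists_isOpen_preimage_subset hn (hU i)
  obtain ⟨T, hT, hTV⟩ := isOpen_iUnion_countable V hV
  choose j hj using fun z : HalfSpace n => mem_iUnion.1 (hcover (mem_univ z))
  have hBA : Bdry n \ ⋃ i, V i ⊆ Bdry n \ A := fun x hx =>
    ⟨hx.1, fun hxA => hx.2 (mem_iUnion.2 ⟨_, hUV _ ⟨x, hx.1.ge⟩ (hj _) fun h => h.2 hxA⟩)⟩
  have hB := h _ (isClosed_bdry.sdiff (isOpen_iUnion hV)) hBA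
  refine ⟨T ∪ j '' (Subtype.val ⁻¹' (Bdry n \ ⋃ i, V i)),
    hT.union ((hB.preimage Subtype.val_injective).image j), fun z _ => ?_⟩
  by_cases hz : z.1 ∈ ⋃ i, V i
  · obtain ⟨i, hi, hzi⟩ := mem_iUnion₂.1 (hTV ▸ hz)
    exact mem_iUnion₂.2 ⟨i, Or.inl hi, hVU i hzi⟩
  · have hzL : z.1 ∈ Bdry n \ A := not_not.1 fun hL => hz (mem_iUnion.2 ⟨_, hUV _ z (hj z) hL⟩)
    exact mem_iUnion₂.2 ⟨j z, Or.inr ⟨z, ⟨hzL.1, hz⟩, rfl⟩, hj z⟩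

end Lindelof

section SigmaCompact

variable {n : ℕ} {A : Set (EuclideanSpace ℝ (Fin n))}

lemma isCompact_tau_preimage (hn : 0 < n) {K : Set (EuclideanSpace ℝ (Fin n))}
    (hK : IsCompact K) (hKA : ∀ x ∈ K, x ∉ Bdry n \ A) :
    @IsCompact _ (tau n A) (Subtype.val ⁻¹' K : Set (HalfSpace n)) := by
  have hcomp : IsCompact (Subtype.val ⁻¹' K : Set (HalfSpace n)) := by
    rw [Subtype.isCompact_iff, Subtype.image_preimage_coe]
    exact hK.inter_left (isClosed_le continuous_const continuous_lastCoord)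
  refine isCompact_of_nhds_le hcomp fun z hz => (nhds_tau_hasBasis hn z).ge_iff.2 fun δ hδ => ?_
  rw [tauBall_of_notMem (hKA z hz)]
  exact continuous_subtype_val.continuousAt.preimage_mem_nhds (ball_mem_nhds _ hδ)

lemma isSigmaCompact_tau_preimage (hn : 0 < n) {C : Set (EuclideanSpace ℝ (Fin n))}
    (hC : IsClosed C) (hCA : ∀ x ∈ C, x ∉ Bdry n \ A) :
    @IsSigmaCompact _ (tau n A) (Subtype.val ⁻¹' C : Set (HalfSpace n)) := by
  obtain ⟨K, hK, hKC⟩ := isSigmaCompact_univ.of_isClosed_subset hC (subset_univ C)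
  refine ⟨fun m => Subtype.val ⁻¹' K m, fun m => isCompact_tau_preimage hn (hK m)
    fun x hx => hCA x (hKC ▸ mem_iUnion_of_mem m hx), by rw [← preimage_iUnion, hKC]⟩

lemma sigmaCompactSpace_of_isFsigma (hn : 0 < n)
    (hA : ∃ C : ℕ → Set (EuclideanSpace ℝ (Fin n)), (∀ i, IsClosed (C i)) ∧
      ⋃ i, C i = Bdry n ∩ A)
    (hcount : (Bdry n \ A).Countable) : @SigmaCompactSpace _ (tau n A) := by
  let _ := tau n A
  obtain ⟨C, hC, hCA⟩ := hA
  have hP : IsSigmaCompact (Subtype.val ⁻¹' {x | 0 < lastCoord n x} : Set (HalfSpace n)) := by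
    have hPeq : {x | 0 < lastCoord n x} = ⋃ j : ℕ, {x | 1 / (j + 1 : ℝ) ≤ lastCoord n x} := by
      ext x
      simp only [mem_ofPred_eq, mem_iUnion]
      refine ⟨fun hx => (exists_nat_one_div_lt hx).imp fun _ => le_of_lt,
        fun ⟨j, hj⟩ => lt_of_lt_of_le (by positivity) hj⟩
    rw [hPeq, preimage_iUnion]
    refine isSigmaCompact_iUnion _ fun j => isSigmaCompact_tau_preimage hn
      (isClosed_le continuous_const continuous_lastCoord) fun x hx hL => ?_
    have : (0 : ℝ) < 1 / (j + 1) := by positivity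
    exact (this.trans_le hx).ne' hL.1
  have hLA : IsSigmaCompact (Subtype.val ⁻¹' (Bdry n ∩ A) : Set (HalfSpace n)) := by
    rw [← hCA, preimage_iUnion]
    exact isSigmaCompact_iUnion _ fun i => isSigmaCompact_tau_preimage hn (hC i)
      fun x hx hL => hL.2 (hCA ▸ mem_iUnion_of_mem i hx).2
  refine isSigmaCompact_univ_iff.1 ?_
  convert (hP.union hLA).union (hcount.preimage Subtype.val_injective).isSigmaCompact
  refine (eq_univ_of_forall fun z => ?_).symm
  rcases (show 0 ≤ lastCoord n z.1 from z.2).lt_or_eq with hzP | hzL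
  · exact Or.inl (Or.inl hzP)
  · by_cases hzA : z.1 ∈ A
    exacts [Or.inl (Or.inr ⟨hzL.symm, hzA⟩), Or.inr ⟨hzL.symm, hzA⟩]

/-- The trace `C m` on `L` of a compact set and its part `D m` in `A` are Euclidean compact, so
`C m \ D m` is a Euclidean `Fσ`-subset of `L \ A`. -/
lemma isFsigma_and_countable_of_sigmaCompactSpace (hn : 0 < n)
    (h : @SigmaCompactSpace _ (tau n A)) :
    (∃ C : ℕ → Set (EuclideanSpace ℝ (Fin n)), (∀ i, IsClosed (C i)) ∧
      ⋃ i, C i = Bdry n ∩ A) ∧ (Bdry n \ A).Countable := by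
  let _ := tau n A
  let K := compactCovering (HalfSpace n)
  have himage (m : ℕ) {S : Set (HalfSpace n)} (hS : IsClosed S) :
      IsClosed (Subtype.val '' (K m ∩ S)) :=
    (((isCompact_compactCovering _ m).inter_right hS).image (continuous_val_tau hn)).isClosed
  have hL : IsClosed (Subtype.val ⁻¹' Bdry n : Set (HalfSpace n)) :=
    isClosed_tau_of_subset_bdry hn subset_rfl fun _ hz _ => hz.1
  have hLA : IsClosed (Subtype.val ⁻¹' (Bdry n ∩ A) : Set (HalfSpace n)) :=
    isClosed_tau_of_subset_bdry hn (fun _ hz => hz.1) fun _ hz _ => hz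
  let C m := Subtype.val '' (K m ∩ Subtype.val ⁻¹' Bdry n)
  let D m := Subtype.val '' (K m ∩ Subtype.val ⁻¹' (Bdry n ∩ A))
  have hCD (m : ℕ) : C m \ D m ⊆ Bdry n \ A := by
    rintro _ ⟨⟨z, ⟨hzK, hzL⟩, rfl⟩, hzD⟩
    exact ⟨hzL, fun hzA => hzD ⟨z, ⟨hzK, hzL, hzA⟩, rfl⟩⟩
  have hcover : Bdry n \ A ⊆ ⋃ m, C m \ D m := fun x hx => by
    obtain ⟨m, hm⟩ := exists_mem_compactCovering (⟨x, hx.1.ge⟩ : HalfSpace n)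
    exact mem_iUnion.2 ⟨m, ⟨_, ⟨hm, hx.1⟩, rfl⟩, fun ⟨_, ⟨_, hzA⟩, hzx⟩ => hx.2 (hzx ▸ hzA.2)⟩
  refine ⟨⟨D, fun m => himage m hLA, ?_⟩, (countable_iUnion fun m => ?_).mono hcover⟩
  · rw [← image_iUnion, ← iUnion_inter, iUnion_compactCovering, univ_inter,
      Subtype.image_preimage_coe, inter_eq_right.2 (inter_subset_left.trans bdry_subset_halfSpace)]
  · exact countable_diff_of_forall_isClosed (himage m hL) (himage m hLA) fun F hF hFCD =>
      countable_of_isClosed_subset_bdry_diff hn inferInstance hF (hFCD.trans (hCD m))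

end SigmaCompact

theorem tauA_perfect_lindelof_sigmaCompact_iff_general (n : ℕ) (hn : 2 ≤ n)
    (A : Set (EuclideanSpace ℝ (Fin n))) :
    (@IsPerfectSpace (HalfSpace n) (tau n A) ↔ IsGδ (Subtype.val ⁻¹' A : Set (Bdry n))) ∧
    (@LindelofSpace (HalfSpace n) (tau n A) ↔
      ¬ ∃ B, B ⊆ Bdry n \ A ∧ ¬ B.Countable ∧
        IsClosed (Subtype.val ⁻¹' B : Set (Bdry n))) ∧
    (@SigmaCompactSpace (HalfSpace n) (tau n A) ↔
      IsFsigma (Subtype.val ⁻¹' A : Set (Bdry n)) ∧ (Bdry n \ A).Countable) := by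
  have hpos : 0 < n := by omega
  have hclosed {B : Set (EuclideanSpace ℝ (Fin n))} (hB : B ⊆ Bdry n \ A) :
      IsClosed (Subtype.val ⁻¹' B : Set (Bdry n)) ↔ IsClosed B :=
    isClosed_preimage_val_iff_of_subset isClosed_bdry (hB.trans sdiff_subset)
  refine ⟨⟨isGδ_of_isPerfectSpace hpos, isPerfectSpace_of_isGδ hpos⟩,
    ⟨fun h => ?_, fun h => ?_⟩, ?_⟩
  · rintro ⟨B, hBA, hunc, hB⟩
    exact hunc (countable_of_isClosed_subset_bdry_diff hpos h ((hclosed hBA).1 hB) hBA)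
  · exact lindelofSpace_of_forall_countable hpos fun B hB hBA =>
      not_not.1 fun hunc => h ⟨B, hBA, hunc, (hclosed hBA).2 hB⟩
  · rw [isFsigma_preimage_val_iff isClosed_bdry]
    exact ⟨isFsigma_and_countable_of_sigmaCompactSpace hpos,
      fun h => sigmaCompactSpace_of_isFsigma hpos h.1 h.2⟩

/-- For every `n ≥ 2` and `A ⊆ L`: `(X, τ(A))` is perfect iff `A` is a `Gδ`-set in
`(L, τ_E|_L)`; it is Lindelöf iff `L \ A` contains no uncountable Euclidean-closed subset of
`L`; and it is σ-compact iff `A` is an `Fσ`-set in `(L, τ_E|_L)` and `L \ A` is countable. -/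
theorem tauA_perfect_lindelof_sigmaCompact_iff (n : ℕ) (hn : 2 ≤ n)
    (A : Set (EuclideanSpace ℝ (Fin n))) (hA : A ⊆ Bdry n) :
    (@IsPerfectSpace (HalfSpace n) (tau n A) ↔ IsGδ (Subtype.val ⁻¹' A : Set (Bdry n))) ∧
    (@LindelofSpace (HalfSpace n) (tau n A) ↔
      ¬ ∃ B, B ⊆ Bdry n \ A ∧ ¬ B.Countable ∧
        IsClosed (Subtype.val ⁻¹' B : Set (Bdry n))) ∧
    (@SigmaCompactSpace (HalfSpace n) (tau n A) ↔
      IsFsigma (Subtype.val ⁻¹' A : Set (Bdry n)) ∧ (Bdry n \ A).Countable) :=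
  tauA_perfect_lindelof_sigmaCompact_iff_general n hn A
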